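/- Let Γ be the set of cycles C_e, one for each edge e = {B1, B2} of B joining two boxes of the same level, where C_e = (B1, B', B2, B1) if parent(B1) = parent(B2) = B', and C_e = (B1, parent(B1), parent(B2), B2, B1) otherwise. Then Γ generates the cycle space of B over GF(2), i.e. the edge set of every subgraph of B in which all vertices have even degree is a symmetric difference of the edge sets of members of Γ; moreover, the vertex set of every member of Γ induces a clique in G^+. -/

import Mathlib

open Filter Set
open scoped ENNReal NNReal Topology

noncomputable section

def torusDist {d : ℕ} (L : ℝ) (x y : Fin d → ℝ) : ℝ :=
  ⨆ k : Fin d, ⨅ m : ℤ, |x k - y k - m * L|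

lemma torusDist_symm {d : ℕ} (L : ℝ) (x y : Fin d → ℝ) :
    torusDist L x y = torusDist L y x := by
  unfold torusDist
  refine iSup_congr fun k => ?_
  rw [← sInf_range, ← sInf_range]
  congr 1
  ext r
  simp only [Set.mem_range]
  constructor
  · rintro ⟨m, rfl⟩
    refine ⟨-m, ?_⟩
    have h : y k - x k - ((-m : ℤ) : ℝ) * L = -(x k - y k - (m : ℤ) * L) := by
      push_cast; ring
    rw [h, abs_neg]
  · rintro ⟨m, rfl⟩
    refine ⟨-m, ?_⟩
    have h : x k - y k - ((-m : ℤ) : ℝ) * L = -(y k - x k - (m : ℤ) * L) := by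
      push_cast; ring
    rw [h, abs_neg]

def girgGraph {d : ℕ} (L : ℝ) {V : Type*} (pos : V → Fin d → ℝ) (wt : V → ℝ) :
    SimpleGraph V where
  Adj u v := u ≠ v ∧ torusDist L (pos u) (pos v) ^ d ≤ wt u * wt v
  symm := by
    refine ⟨?_⟩
    intro u v h
    exact ⟨h.1.symm, by rw [torusDist_symm, mul_comm]; exact h.2⟩
  loopless := ⟨fun u h => h.1 rfl⟩

/-- `wLow d i = 2^{d i / 2}`, the lower end of the weight range of a level-`i` box. -/
def wLow (d i : ℕ) : ℝ := (2 : ℝ) ^ ((d : ℝ) * i / 2)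

/-- A box of the tessellation: a level `0 ≤ level ≤ k0` together with the coordinates of
its geometric cell.  Boxes of level `< k0` are the usual boxes and the unique box of level
`k0` is the top box. -/
@[ext]
structure Box (d k0 : ℕ) where
  level : ℕ
  idx : Fin d → ℕ
  level_le : level ≤ k0
  idx_pos : ∀ k, 1 ≤ idx k
  idx_le : ∀ k, idx k ≤ 2 ^ (k0 - level)

instance (d k0 : ℕ) : Finite (Box d k0) := by
  apply Finite.of_injective (fun B : Box d k0 =>
    ((⟨B.level, Nat.lt_succ_of_le B.level_le⟩ : Fin (k0 + 1)),
      fun k => (⟨B.idx k, Nat.lt_succ_of_le ((B.idx_le k).trans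
        (Nat.pow_le_pow_right (by norm_num) (Nat.sub_le k0 B.level)))⟩ : Fin (2 ^ k0 + 1))))
  intro B1 B2 h
  simp only [Prod.mk.injEq, Fin.mk.injEq, funext_iff] at h
  exact Box.ext h.1 (funext fun k => by simpa using h.2 k)

/-- The region of the augmented space `V_w = T × [1, ∞)` occupied by a box. -/
def boxSet (d k0 : ℕ) (D0 : ℝ) (B : Box d k0) : Set ((Fin d → ℝ) × ℝ) :=
  {p | (∀ k, 2 ^ B.level * ((B.idx k : ℝ) - 1) * D0 ≤ p.1 k ∧
          p.1 k < 2 ^ B.level * (B.idx k : ℝ) * D0) ∧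
       wLow d B.level ≤ p.2 ∧ (B.level < k0 → p.2 < wLow d (B.level + 1))}

/-- Translation of an augmented point by an integer multiple of the torus period in
each geometric coordinate. -/
def torusShift {d : ℕ} (L : ℝ) (v : Fin d → ℤ) (p : (Fin d → ℝ) × ℝ) : (Fin d → ℝ) × ℝ :=
  (fun k => p.1 k + (v k : ℝ) * L, p.2)

/-- The closures of `S1` and `S2` intersect (as subsets of the torus, i.e. up to integer
translations of the geometric coordinates) in a set of Hausdorff dimension at least `δ`. -/
def meetsDim {d : ℕ} (L : ℝ) (δ : ℕ) (S1 S2 : Set ((Fin d → ℝ) × ℝ)) : Prop :=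
  ∃ v w : Fin d → ℤ,
    (δ : ℝ≥0∞) ≤ dimH (torusShift L v '' closure S1 ∩ torusShift L w '' closure S2)

/-- The closures of `S1` and `S2` intersect (as subsets of the torus). -/
def meets {d : ℕ} (L : ℝ) (S1 S2 : Set ((Fin d → ℝ) × ℝ)) : Prop :=
  ∃ v w : Fin d → ℤ,
    (torusShift L v '' closure S1 ∩ torusShift L w '' closure S2).Nonempty

/-- The graph `𝓑` on boxes: two boxes are adjacent iff their closures intersect in a
`d`-dimensional set. -/
def boxGraph (d k0 : ℕ) (D0 L : ℝ) : SimpleGraph (Box d k0) where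
  Adj B1 B2 := B1 ≠ B2 ∧ meetsDim L d (boxSet d k0 D0 B1) (boxSet d k0 D0 B2)
  symm := by
    refine ⟨?_⟩
    rintro B1 B2 ⟨h1, v, w, h⟩
    exact ⟨h1.symm, w, v, by rwa [Set.inter_comm]⟩
  loopless := ⟨fun B h => h.1 rfl⟩

/-- The graph `𝓖⁺` on boxes: two boxes are adjacent iff their closures intersect. -/
def gPlusGraph (d k0 : ℕ) (D0 L : ℝ) : SimpleGraph (Box d k0) where
  Adj B1 B2 := B1 ≠ B2 ∧ meets L (boxSet d k0 D0 B1) (boxSet d k0 D0 B2)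
  symm := by
    refine ⟨?_⟩
    rintro B1 B2 ⟨h1, v, w, h⟩
    exact ⟨h1.symm, w, v, by rwa [Set.inter_comm]⟩
  loopless := ⟨fun B h => h.1 rfl⟩

/-- The parent of a box: the box of the next level directly above it (the unique box of
minimum volume whose geometric projection strictly contains that of the given box).
The top box is its own parent. -/
def parentBox {d k0 : ℕ} (B : Box d k0) : Box d k0 :=
  if h : B.level < k0 then
    { level := B.level + 1
      idx := fun k => (B.idx k + 1) / 2
      level_le := h
      idx_pos := fun k => by
        have := B.idx_pos k
        show 1 ≤ (B.idx k + 1) / 2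
        omega
      idx_le := fun k => by
        have h1 := B.idx_le k
        have h2 : k0 - B.level = (k0 - (B.level + 1)) + 1 := by omega
        rw [h2, pow_succ] at h1
        show (B.idx k + 1) / 2 ≤ 2 ^ (k0 - (B.level + 1))
        omega }
  else B

lemma parentBox_level_le {d k0 : ℕ} (B : Box d k0) : B.level ≤ (parentBox B).level := by
  unfold parentBox
  split <;> simp

/-- The spanning tree `T_𝓑` of `𝓑`, given by the parent edges. -/
def treeGraph (d k0 : ℕ) : SimpleGraph (Box d k0) where
  Adj B1 B2 := B1 ≠ B2 ∧ (parentBox B1 = B2 ∨ parentBox B2 = B1)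
  symm := by
    refine ⟨?_⟩
    rintro B1 B2 ⟨h1, h2⟩
    exact ⟨h1.symm, h2.symm⟩
  loopless := ⟨fun B h => h.1 rfl⟩

/-- The subgraph of `G` induced by a set `R` (kept on the ambient vertex type). -/
def onSet {V : Type*} (G : SimpleGraph V) (R : Set V) : SimpleGraph V where
  Adj a b := a ∈ R ∧ b ∈ R ∧ G.Adj a b
  symm := ⟨fun _ _ h => ⟨h.2.1, h.1, h.2.2.symm⟩⟩
  loopless := ⟨fun a h => G.loopless.irrefl a h.2.2⟩

section Generic

variable {α : Type*}

/-- `m`-fold ancestor with respect to a parent function. -/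
def ancF (par : α → α) (B : α) (m : ℕ) : α := par^[m] B

/-- Number of steps from `B1` to the lowest common ancestor of `B1` and `B2`. -/
def lcaStepsF (par : α → α) (B1 B2 : α) : ℕ :=
  sInf {m | ∃ m', ancF par B2 m' = ancF par B1 m}

/-- Number of steps from `B2` to the lowest common ancestor of `B1` and `B2`. -/
def lcaStepsF' (par : α → α) (B1 B2 : α) : ℕ :=
  sInf {m | ancF par B2 m = ancF par B1 (lcaStepsF par B1 B2)}

/-- The canonical path `L(B1, B2)`: the unique path between `B1` and `B2` in the spanning
tree given by the parent edges, i.e. the two upward paths to the lowest common ancestor. -/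
def canonPathF (par : α → α) (B1 B2 : α) : Set α :=
  {A | ∃ m ≤ lcaStepsF par B1 B2, ancF par B1 m = A} ∪
    {A | ∃ m ≤ lcaStepsF' par B1 B2, ancF par B2 m = A}

/-- `L'(B1, B2)`: the canonical path together with everything `G⁺`-adjacent to it. -/
def extPathF (par : α → α) (Gp : SimpleGraph α) (B1 B2 : α) : Set α :=
  canonPathF par B1 B2 ∪ {B | ∃ B' ∈ canonPathF par B1 B2, Gp.Adj B B'}

/-- `W(B1, B2)`: `L'(B1, B2)` together with all connected components of inactive elements
(in `G⁺`) meeting `L'(B1, B2)`. -/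
def WsetF (par : α → α) (Gp : SimpleGraph α) (act : α → Prop) (B1 B2 : α) : Set α :=
  extPathF par Gp B1 B2 ∪
    {B | ¬ act B ∧ ∃ B' ∈ extPathF par Gp B1 B2, ¬ act B' ∧
      (onSet Gp {C | ¬ act C}).Reachable B' B}

/-- `S(B1, B2)`: the elements outside `W(B1, B2)` that are `G⁺`-adjacent to it
(they are automatically active). -/
def SsetF (par : α → α) (Gp : SimpleGraph α) (act : α → Prop) (B1 B2 : α) : Set α :=
  {B | B ∉ WsetF par Gp act B1 B2 ∧ ∃ B' ∈ WsetF par Gp act B1 B2, Gp.Adj B B'}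

/-- The boundary of `C` visible from `x`: elements `G⁺`-adjacent to `C` that are connected
to `x` in `𝓑` with `C` removed. -/
def visBoundaryF (Gb Gp : SimpleGraph α) (C : Set α) (x : α) : Set α :=
  {B' | (∃ B'' ∈ C, Gp.Adj B' B'') ∧ (onSet Gb Cᶜ).Reachable x B'}

end Generic

/-- A box is active if it contains the augmented point of at least one vertex. -/
def isActive (d k0 : ℕ) (D0 : ℝ) {V : Type*} (pos : V → Fin d → ℝ) (wt : V → ℝ)
    (B : Box d k0) : Prop :=
  ∃ u, (pos u, wt u) ∈ boxSet d k0 D0 B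

end

open Classical in
/-- The characteristic vector over `GF(2)` of a set of (potential) edges. -/
noncomputable def chi {α : Type*} (E : Set α) : α → ZMod 2 :=
  fun e => if e ∈ E then 1 else 0

/-- The generating set `Γ`: for each edge `e = {B1, B2}` of `𝓑` joining two boxes of the
same level, the cycle `(B1, B', B2)` if the parents coincide (`B' = parent B1 = parent B2`),
and the cycle `(B1, parent B1, parent B2, B2)` otherwise. -/
def gammaSet (d k0 : ℕ) (D0 L : ℝ) : Set (Set (Sym2 (Box d k0))) :=
  {E | ∃ B1 B2 : Box d k0, (boxGraph d k0 D0 L).Adj B1 B2 ∧ B1.level = B2.level ∧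
    ((parentBox B1 = parentBox B2 ∧
        E = {s(B1, parentBox B1), s(parentBox B1, B2), s(B2, B1)}) ∨
     (parentBox B1 ≠ parentBox B2 ∧
        E = {s(B1, parentBox B1), s(parentBox B1, parentBox B2),
             s(parentBox B2, B2), s(B2, B1)}))}

/-! The parent edges form a spanning tree of `𝓑`. A mod-2 cycle supported on this tree is zero
(its edges can be peeled off leaf by leaf, by increasing level), so every cycle is the sum of the
fundamental cycles `e + P(B1) + P(B2)` of its non-tree edges `e = {B1, B2}`, where `P(B)` is the
tree path from `B` up to the top box.

Geometrically, two boxes whose closures meet in a `d`-dimensional set have levels differing by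
at most one, and if they differ by one the upper box is the parent: otherwise one geometric
coordinate and the weight are constant on the intersection of the closures, which then has
dimension at most `d - 1`. So every non-tree edge of `𝓑` joins two boxes of the same level. For
such an edge the fundamental cycle is `C_e`, plus, if the parents differ, the fundamental cycle
of the edge between the parents; that is an edge of `𝓑` because multiplying weights by `2^{d/2}`
maps the meeting of two boxes into the meeting of their parents. Induction on the level puts all
these fundamental cycles into the span of `Γ`.

For the clique property, pick a common point of `B1` and `B2` and move it to the weight
`2^{d(l+1)/2}` at the top of level `l`: that point lies in the closures of `B1`, `B2` and of both
parents. -/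

section CycleSpace

open Finset

variable {α : Type*} [Fintype α] [DecidableEq α] (R : Type*) [CommRing R]

def edgeBoundary : (Sym2 α → R) →ₗ[R] (α → R) :=
  LinearMap.pi fun v => ∑ u ∈ univ.erase v, LinearMap.proj s(v, u)

variable {R}

lemma edgeBoundary_apply (f : Sym2 α → R) (v : α) :
    edgeBoundary R f v = ∑ u ∈ univ.erase v, f s(v, u) := by
  simp [edgeBoundary]

lemma edgeBoundary_single {a b : α} (hab : a ≠ b) :
    edgeBoundary R (Pi.single s(a, b) 1) = Pi.single a 1 + Pi.single b 1 := by
  ext v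
  rw [edgeBoundary_apply]
  by_cases hva : v = a
  · subst hva
    simp [Pi.single_apply, hab, Ne.symm hab]
  · by_cases hvb : v = b
    · subst hvb
      simp [Pi.single_apply, hab, Ne.symm hab]
    · simp [hva, hvb]

def parentEdges (par : α → α) : Set (Sym2 α) := {e | ∃ a, par a ≠ a ∧ s(a, par a) = e}

variable {par : α → α} {rank : α → ℕ}

theorem eq_zero_of_edgeBoundary_eq_zero (hrank : ∀ a, par a ≠ a → rank a < rank (par a))
    {f : Sym2 α → R} (hf : edgeBoundary R f = 0) (hsupp : ∀ e ∉ parentEdges par, f e = 0) :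
    f = 0 := by
  have hpar : ∀ n a, rank a = n → par a ≠ a → f s(a, par a) = 0 := by
    intro n
    induction n using Nat.strong_induction_on with
    | _ n ih =>
      rintro a rfl ha
      have hsum := congrFun hf a
      rw [edgeBoundary_apply, Finset.sum_eq_single (par a)] at hsum
      · exact hsum
      · intro u _ hua
        by_contra hne
        obtain ⟨c, hc, hce⟩ : s(a, u) ∈ parentEdges par := by
          by_contra h
          exact hne (hsupp _ h)
        rcases Sym2.eq_iff.mp hce with ⟨rfl, rfl⟩ | ⟨rfl, rfl⟩
        · exact hua rfl
        · exact hne (by rw [Sym2.eq_swap]; exact ih _ (hrank c hc) c rfl hc)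
      · simp [ha]
  ext e
  by_cases he : e ∈ parentEdges par
  · obtain ⟨a, ha, rfl⟩ := he
    exact hpar _ a rfl ha
  · exact hsupp e he

theorem mem_of_edgeBoundary_eq_zero (hrank : ∀ a, par a ≠ a → rank a < rank (par a))
    {W : Submodule R (Sym2 α → R)} (S : Finset (Sym2 α)) (c : Sym2 α → Sym2 α → R)
    (hcW : ∀ e ∈ S, c e ∈ W) (hc : ∀ e ∈ S, edgeBoundary R (c e) = 0)
    (hcS : ∀ e ∈ S, ∀ e' ∉ parentEdges par, c e e' = (Pi.single e 1 : Sym2 α → R) e')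
    {f : Sym2 α → R} (hf : edgeBoundary R f = 0)
    (hfS : ∀ e ∉ parentEdges par, e ∉ S → f e = 0) :
    f ∈ W := by
  have hzero : f - ∑ e ∈ S, f e • c e = 0 := by
    refine eq_zero_of_edgeBoundary_eq_zero hrank ?_ fun e' he' => ?_
    · rw [map_sub, map_sum, hf, zero_sub, neg_eq_zero]
      exact Finset.sum_eq_zero fun e he => by rw [map_smul, hc e he, smul_zero]
    · simp only [Pi.sub_apply, Finset.sum_apply, Pi.smul_apply, smul_eq_mul]
      rw [Finset.sum_congr rfl fun e he => by rw [hcS e he e' he']]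
      by_cases he'S : e' ∈ S
      · simp [Pi.single_apply, he'S]
      · simp [Pi.single_apply, he'S, hfS e' he' he'S]
  rw [sub_eq_zero.mp hzero]
  exact W.sum_mem fun e he => W.smul_mem _ (hcW e he)

end CycleSpace

lemma chi_singleton {α : Type*} [DecidableEq α] (x : α) : chi {x} = Pi.single x 1 := by
  ext e
  simp [chi, Pi.single_apply]

lemma chi_insert {α : Type*} [DecidableEq α] {x : α} {S : Set α} (hx : x ∉ S) :
    chi (insert x S) = Pi.single x 1 + chi S := by
  ext e
  simp only [chi, Pi.add_apply, Pi.single_apply, Set.mem_insert_iff]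
  split_ifs <;> simp_all

lemma edgeBoundary_chi_edgeSet {α : Type*} [Fintype α] [DecidableEq α] {H : SimpleGraph α}
    (heven : ∀ v, Even {u | H.Adj v u}.ncard) : edgeBoundary (ZMod 2) (chi H.edgeSet) = 0 := by
  classical
  ext v
  rw [edgeBoundary_apply, Finset.sum_erase _ (by simp [chi]), Pi.zero_apply]
  simp only [chi, SimpleGraph.mem_edgeSet]
  rw [Finset.sum_boole, ← Set.ncard_coe_finset]
  simpa [ZMod.natCast_eq_zero_iff_even] using heven v

section Boxes

variable {d k0 : ℕ} {D0 L : ℝ}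

instance : DecidableEq (Box d k0) := fun B1 B2 =>
  decidable_of_iff (B1.level = B2.level ∧ B1.idx = B2.idx) Box.ext_iff.symm

noncomputable instance : Fintype (Box d k0) := Fintype.ofFinite _

lemma wLow_succ (d i : ℕ) : wLow d (i + 1) = 2 ^ ((d : ℝ) / 2) * wLow d i := by
  rw [wLow, wLow, ← Real.rpow_add two_pos]
  congr 1
  push_cast
  ring

lemma one_le_two_rpow_half (d : ℕ) : 1 ≤ (2 : ℝ) ^ ((d : ℝ) / 2) :=
  Real.one_le_rpow one_le_two (by positivity)

lemma wLow_le_wLow_succ (d i : ℕ) : wLow d i ≤ wLow d (i + 1) := by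
  rw [wLow_succ]
  exact le_mul_of_one_le_left (Real.rpow_nonneg zero_le_two _) (one_le_two_rpow_half d)

lemma wLow_strictMono (hd : 0 < d) : StrictMono (wLow d) := fun i j hij =>
  Real.rpow_lt_rpow_of_exponent_lt one_lt_two (by
    have : (i : ℝ) < j := by exact_mod_cast hij
    have : (0 : ℝ) < d := by exact_mod_cast hd
    rw [div_lt_div_iff_of_pos_right two_pos]
    exact mul_lt_mul_of_pos_left ‹_› ‹_›)

lemma parentBox_level {B : Box d k0} (h : B.level < k0) : (parentBox B).level = B.level + 1 := by
  simp [parentBox, h]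

lemma parentBox_idx {B : Box d k0} (h : B.level < k0) (k : Fin d) :
    (parentBox B).idx k = (B.idx k + 1) / 2 := by
  simp [parentBox, h]

lemma parentBox_of_not_lt {B : Box d k0} (h : ¬ B.level < k0) : parentBox B = B := dif_neg h

lemma parentBox_ne {B : Box d k0} (h : B.level < k0) : parentBox B ≠ B := fun he => by
  simpa [he] using parentBox_level h

lemma level_lt_parentBox_level {B : Box d k0} (h : parentBox B ≠ B) :
    B.level < (parentBox B).level := by
  by_cases hB : B.level < k0
  · rw [parentBox_level hB]; omega
  · exact absurd (parentBox_of_not_lt hB) h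

lemma ne_parentBox_of_level_eq {B B' : Box d k0} (hl : B'.level < k0) (h : B.level = B'.level) :
    B ≠ parentBox B' := fun he => by
  have := parentBox_level hl
  rw [← he] at this
  omega

def topBox (d k0 : ℕ) : Box d k0 where
  level := k0
  idx _ := 1
  level_le := le_rfl
  idx_pos _ := le_rfl
  idx_le _ := by simp

lemma eq_topBox {B : Box d k0} (h : B.level = k0) : B = topBox d k0 := by
  refine Box.ext h (funext fun k => ?_)
  have hle := B.idx_le k
  rw [h, Nat.sub_self, pow_zero] at hle
  exact le_antisymm hle (B.idx_pos k)

lemma level_lt_of_ne {B1 B2 : Box d k0} (hne : B1 ≠ B2) (hlev : B1.level = B2.level) :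
    B1.level < k0 := by
  refine B1.level_le.lt_of_ne fun h => hne ?_
  rw [eq_topBox h, eq_topBox (B := B2) (hlev ▸ h)]

def rootPath (B : Box d k0) : Sym2 (Box d k0) → ZMod 2 :=
  if h : B.level < k0 then Pi.single s(B, parentBox B) 1 + rootPath (parentBox B) else 0
termination_by k0 - B.level
decreasing_by rw [parentBox_level h]; omega

lemma rootPath_of_lt {B : Box d k0} (h : B.level < k0) :
    rootPath B = Pi.single s(B, parentBox B) 1 + rootPath (parentBox B) := by
  rw [rootPath, dif_pos h]

lemma rootPath_of_not_lt {B : Box d k0} (h : ¬ B.level < k0) : rootPath B = 0 := by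
  rw [rootPath, dif_neg h]

theorem rootPath_apply_of_notMem {e : Sym2 (Box d k0)} (he : e ∉ parentEdges parentBox)
    (B : Box d k0) : rootPath B e = 0 := by
  by_cases h : B.level < k0
  · have hne : e ≠ s(B, parentBox B) := fun hB => he ⟨B, parentBox_ne h, hB.symm⟩
    rw [rootPath_of_lt h, Pi.add_apply, Pi.single_eq_of_ne hne,
      rootPath_apply_of_notMem he (parentBox B), add_zero]
  · rw [rootPath_of_not_lt h, Pi.zero_apply]
termination_by k0 - B.level
decreasing_by rw [parentBox_level h]; omega

theorem edgeBoundary_rootPath (B : Box d k0) :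
    edgeBoundary (ZMod 2) (rootPath B) = Pi.single B 1 + Pi.single (topBox d k0) 1 := by
  by_cases h : B.level < k0
  · rw [rootPath_of_lt h, map_add, edgeBoundary_single (parentBox_ne h).symm,
      edgeBoundary_rootPath (parentBox B), ZModModule.add_add_add_cancel]
  · rw [rootPath_of_not_lt h, map_zero, ← eq_topBox (B := B) (by have := B.level_le; omega),
      ZModModule.add_self]
termination_by k0 - B.level
decreasing_by rw [parentBox_level h]; omega

def fundCycle : Sym2 (Box d k0) → Sym2 (Box d k0) → ZMod 2 :=
  Sym2.lift ⟨fun B1 B2 => Pi.single s(B1, B2) 1 + rootPath B1 + rootPath B2, fun B1 B2 => by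
    dsimp only
    rw [Sym2.eq_swap, add_assoc, add_assoc, add_comm (rootPath B1)]⟩

lemma fundCycle_mk (B1 B2 : Box d k0) :
    fundCycle s(B1, B2) = Pi.single s(B1, B2) 1 + rootPath B1 + rootPath B2 := rfl

lemma edgeBoundary_fundCycle {B1 B2 : Box d k0} (hne : B1 ≠ B2) :
    edgeBoundary (ZMod 2) (fundCycle s(B1, B2)) = 0 := by
  rw [fundCycle_mk, map_add, map_add, edgeBoundary_single hne, edgeBoundary_rootPath,
    edgeBoundary_rootPath]
  abel_nf
  simp only [two_zsmul, ZModModule.add_self]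

lemma fundCycle_apply_of_notMem {e' : Sym2 (Box d k0)} (he' : e' ∉ parentEdges parentBox)
    (e : Sym2 (Box d k0)) : fundCycle e e' = (Pi.single e 1 : Sym2 (Box d k0) → ZMod 2) e' := by
  induction e using Sym2.ind with
  | _ B1 B2 => simp [fundCycle_mk, rootPath_apply_of_notMem he']

namespace Box

def lo (D0 : ℝ) (B : Box d k0) (k : Fin d) : ℝ := 2 ^ B.level * ((B.idx k : ℝ) - 1) * D0

def hi (D0 : ℝ) (B : Box d k0) (k : Fin d) : ℝ := 2 ^ B.level * (B.idx k : ℝ) * D0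

def weights (B : Box d k0) : Set ℝ :=
  {y | wLow d B.level ≤ y ∧ (B.level < k0 → y ≤ wLow d (B.level + 1))}

lemma wLow_mem_weights (B : Box d k0) : wLow d B.level ∈ B.weights :=
  ⟨le_rfl, fun _ => wLow_le_wLow_succ d _⟩

lemma wLow_succ_mem_weights (B : Box d k0) : wLow d (B.level + 1) ∈ B.weights :=
  ⟨wLow_le_wLow_succ d _, fun _ => le_rfl⟩

lemma lo_parentBox_le_lo (hD0 : 0 < D0) {B : Box d k0} (hl : B.level < k0) (k : Fin d) :
    (parentBox B).lo D0 k ≤ B.lo D0 k := by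
  have : ((2 * ((B.idx k + 1) / 2) : ℕ) : ℝ) ≤ B.idx k + 1 := by
    exact_mod_cast Nat.mul_div_le _ _
  simp only [lo, parentBox_level hl, parentBox_idx hl, pow_succ]
  push_cast at this
  nlinarith [mul_le_mul_of_nonneg_left this (mul_pos (pow_pos two_pos B.level) hD0).le]

lemma hi_le_hi_parentBox (hD0 : 0 < D0) {B : Box d k0} (hl : B.level < k0) (k : Fin d) :
    B.hi D0 k ≤ (parentBox B).hi D0 k := by
  have : (B.idx k : ℝ) ≤ ((2 * ((B.idx k + 1) / 2) : ℕ) : ℝ) := by exact_mod_cast (by omega)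
  simp only [hi, parentBox_level hl, parentBox_idx hl, pow_succ]
  push_cast at this
  nlinarith [mul_le_mul_of_nonneg_left this (mul_pos (pow_pos two_pos B.level) hD0).le]

end Box

lemma closure_boxSet (hd : 0 < d) (hD0 : 0 < D0) (B : Box d k0) :
    closure (boxSet d k0 D0 B) = (univ.pi fun k => Icc (B.lo D0 k) (B.hi D0 k)) ×ˢ B.weights := by
  have hlohi : ∀ k, B.lo D0 k ≠ B.hi D0 k := fun k => by
    simp [Box.lo, Box.hi, hD0.ne']
  by_cases hl : B.level < k0
  · have hw : B.weights = Icc (wLow d B.level) (wLow d (B.level + 1)) := by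
      ext y; simp [Box.weights, hl]
    have hbox : boxSet d k0 D0 B = (univ.pi fun k => Ico (B.lo D0 k) (B.hi D0 k)) ×ˢ
        Ico (wLow d B.level) (wLow d (B.level + 1)) := by
      ext p; simp [boxSet, hl, Box.lo, Box.hi, forall_and]
    rw [hw, hbox, closure_prod_eq, closure_pi_set,
      closure_Ico ((wLow_strictMono hd).lt_iff_lt.2 (Nat.lt_succ_self _)).ne]
    simp_rw [closure_Ico (hlohi _)]
  · have hw : B.weights = Ici (wLow d B.level) := by
      ext y; simp [Box.weights, hl]
    have hbox : boxSet d k0 D0 B = (univ.pi fun k => Ico (B.lo D0 k) (B.hi D0 k)) ×ˢ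
        Ici (wLow d B.level) := by
      ext p; simp [boxSet, hl, Box.lo, Box.hi, forall_and]
    rw [hw, hbox, closure_prod_eq, closure_pi_set, closure_Ici]
    simp_rw [closure_Ico (hlohi _)]

lemma mem_torusShift_image {v : Fin d → ℤ} {S : Set ((Fin d → ℝ) × ℝ)}
    {p : (Fin d → ℝ) × ℝ} :
    p ∈ torusShift L v '' S ↔ (fun k => p.1 k - v k * L, p.2) ∈ S := by
  constructor
  · rintro ⟨q, hq, rfl⟩
    simpa [torusShift] using hq
  · intro hp
    exact ⟨_, hp, by ext <;> simp [torusShift]⟩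

lemma mem_torusShift_closure_boxSet (hd : 0 < d) (hD0 : 0 < D0) {B : Box d k0}
    {v : Fin d → ℤ} {p : (Fin d → ℝ) × ℝ} :
    p ∈ torusShift L v '' closure (boxSet d k0 D0 B) ↔
      (∀ k, p.1 k ∈ Icc (B.lo D0 k + v k * L) (B.hi D0 k + v k * L)) ∧ p.2 ∈ B.weights := by
  simp only [mem_torusShift_image, closure_boxSet hd hD0, mem_prod, mem_univ_pi, Set.mem_Icc,
    sub_le_iff_le_add, le_sub_iff_add_le]

lemma dimH_le_of_forall_eq (k : Fin d) (c t : ℝ) {X : Set ((Fin d → ℝ) × ℝ)}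
    (hX : ∀ p ∈ X, p.1 k = c ∧ p.2 = t) : dimH X ≤ (d - 1 : ℕ) := by
  let g : ({j : Fin d // j ≠ k} → ℝ) → (Fin d → ℝ) × ℝ :=
    fun z => (fun j => if h : j = k then c else z ⟨j, h⟩, t)
  have hg : LipschitzWith 1 g := by
    refine LipschitzWith.of_dist_le_mul fun x y => ?_
    rw [NNReal.coe_one, one_mul, Prod.dist_eq, dist_self, max_eq_left dist_nonneg,
      dist_pi_le_iff dist_nonneg]
    intro j
    by_cases hj : j = k
    · simp [g, hj]
    · simpa [g, hj] using dist_le_pi_dist x y ⟨j, hj⟩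
  have hXg : X ⊆ range g := fun p hp => ⟨fun j => p.1 j, Prod.ext (funext fun j => by
    by_cases hj : j = k
    · subst hj; simp [g, (hX p hp).1]
    · simp [g, hj]) (by simp [g, (hX p hp).2])⟩
  calc dimH X ≤ dimH (range g) := dimH_mono hXg
    _ ≤ dimH (univ : Set ({j : Fin d // j ≠ k} → ℝ)) := hg.dimH_range_le
    _ = (d - 1 : ℕ) := by
      rw [Real.dimH_univ_pi, Fintype.card_subtype_compl, Fintype.card_subtype_eq,
        Fintype.card_fin]

lemma exists_eq_of_mem_Icc_of_mem_Icc {s : ℝ} (hs : 0 < s) {a b : ℤ}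
    (hab : ¬ (b ≤ a ∧ a ≤ b + 1)) :
    ∃ c, ∀ x ∈ Icc (s * a) (s * (a + 1)), x ∈ Icc (s * b) (s * (b + 2)) → x = c := by
  rcases lt_or_ge a b with h | h
  · have : (a : ℝ) + 1 ≤ b := by exact_mod_cast h
    refine ⟨s * b, fun x hx1 hx2 => le_antisymm ?_ hx2.1⟩
    nlinarith [hx1.2]
  · have : (b : ℝ) + 2 ≤ a := by
      have : b + 2 ≤ a := by omega
      exact_mod_cast this
    refine ⟨s * a, fun x hx1 hx2 => le_antisymm ?_ hx1.1⟩
    nlinarith [hx2.2]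

lemma div_two_eq_of_le_add_mul_le {i j : ℕ} {t E : ℤ} (hi : 1 ≤ i) (hiE : i ≤ E)
    (hj : 1 ≤ j) (hjE : 2 * j ≤ E) (h1 : 2 * j ≤ i + t * E + 1) (h2 : i + t * E ≤ 2 * j) :
    (i + 1) / 2 = j := by
  have ht : t = 0 := by
    rcases lt_trichotomy t 0 with ht | ht | ht
    · have : t * E ≤ -E := by nlinarith
      omega
    · exact ht
    · have : E ≤ t * E := by nlinarith
      omega
  subst ht
  omega

lemma meets_of_meetsDim (hd : 0 < d) {S1 S2 : Set ((Fin d → ℝ) × ℝ)}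
    (h : meetsDim L d S1 S2) :
    meets L S1 S2 := by
  obtain ⟨v, w, h⟩ := h
  refine ⟨v, w, nonempty_iff_ne_empty.2 fun he => ?_⟩
  rw [he, dimH_empty, nonpos_iff_eq_zero, Nat.cast_eq_zero] at h
  omega

lemma level_le_succ_of_meets (hd : 0 < d) (hD0 : 0 < D0) {B1 B2 : Box d k0}
    (h : meets L (boxSet d k0 D0 B1) (boxSet d k0 D0 B2)) : B2.level ≤ B1.level + 1 := by
  obtain ⟨v, w, p, hp1, hp2⟩ := h
  rw [mem_torusShift_closure_boxSet hd hD0] at hp1 hp2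
  by_cases hl : B1.level < k0
  · exact Nat.lt_succ_iff.1 ((wLow_strictMono hd).lt_iff_lt.1 <|
      ((hp2.2.1).trans (hp1.2.2 hl)).trans_lt ((wLow_strictMono hd) (Nat.lt_succ_self _)))
  · have := B2.level_le
    omega

lemma parentBox_eq_of_idx {B1 B2 : Box d k0} (hlev : B2.level = B1.level + 1) (t : Fin d → ℤ)
    (ht : ∀ k, 2 * (B2.idx k : ℤ) ≤ B1.idx k + t k * 2 ^ (k0 - B1.level) + 1 ∧
      (B1.idx k : ℤ) + t k * 2 ^ (k0 - B1.level) ≤ 2 * B2.idx k) :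
    parentBox B1 = B2 := by
  have hl : B1.level < k0 := by have := B2.level_le; omega
  refine Box.ext (by rw [parentBox_level hl, hlev]) (funext fun k => ?_)
  have hidx := B2.idx_le k
  rw [hlev, show k0 - (B1.level + 1) = k0 - B1.level - 1 by omega] at hidx
  have hjE : 2 * (B2.idx k : ℤ) ≤ 2 ^ (k0 - B1.level) := by
    rw [← Nat.sub_add_cancel (Nat.sub_pos_of_lt hl), pow_succ']
    exact_mod_cast Nat.mul_le_mul_left 2 hidx
  rw [parentBox_idx hl]
  exact div_two_eq_of_le_add_mul_le (B1.idx_pos k) (by exact_mod_cast B1.idx_le k)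
    (B2.idx_pos k) hjE (ht k).1 (ht k).2

theorem parentBox_eq_of_meetsDim (hd : 0 < d) (hD0 : 0 < D0) (hL : L = D0 * 2 ^ k0)
    {B1 B2 : Box d k0} (h : meetsDim L d (boxSet d k0 D0 B1) (boxSet d k0 D0 B2))
    (hlev : B2.level = B1.level + 1) : parentBox B1 = B2 := by
  obtain ⟨v, w, hdim⟩ := h
  have hl : B1.level < k0 := by have := B2.level_le; omega
  set l := B1.level
  set s : ℝ := 2 ^ l * D0
  set E : ℤ := 2 ^ (k0 - l)
  have hE : (2 : ℝ) ^ k0 = 2 ^ l * E := by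
    rw [Int.cast_pow, Int.cast_ofNat, ← pow_add, Nat.add_sub_cancel' hl.le]
  -- in units of `s`, the shifted `B1` spans `[α k, α k + 1]`, the shifted `B2` `[β k, β k + 2]`
  set α : Fin d → ℤ := fun k => B1.idx k - 1 + v k * E
  set β : Fin d → ℤ := fun k => 2 * (B2.idx k - 1) + w k * E
  have hB1 : ∀ k, Icc (B1.lo D0 k + v k * L) (B1.hi D0 k + v k * L) =
      Icc (s * α k) (s * (α k + 1)) := fun k => by
    simp only [Box.lo, Box.hi, hL, hE, s, α, l]; push_cast; ring_nf
  have hB2 : ∀ k, Icc (B2.lo D0 k + w k * L) (B2.hi D0 k + w k * L) =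
      Icc (s * β k) (s * (β k + 2)) := fun k => by
    simp only [Box.lo, Box.hi, hL, hE, hlev, s, β, l]; push_cast; ring_nf
  by_cases hall : ∀ k, β k ≤ α k ∧ α k ≤ β k + 1
  · exact parentBox_eq_of_idx hlev (v - w) fun k => by
      simp only [Pi.sub_apply]
      constructor <;> linarith [hall k]
  · obtain ⟨k, hk⟩ := not_forall.1 hall
    obtain ⟨c, hc⟩ := exists_eq_of_mem_Icc_of_mem_Icc (s := s) (by positivity) hk
    have hflat := dimH_le_of_forall_eq k c (wLow d (l + 1)) (X := torusShift L v ''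
      closure (boxSet d k0 D0 B1) ∩ torusShift L w '' closure (boxSet d k0 D0 B2))
      fun p ⟨hp1, hp2⟩ => by
        rw [mem_torusShift_closure_boxSet hd hD0] at hp1 hp2
        refine ⟨hc _ (hB1 k ▸ hp1.1 k) (hB2 k ▸ hp2.1 k), le_antisymm (hp1.2.2 hl) ?_⟩
        simpa [hlev] using hp2.2.1
    have := Nat.cast_le.1 (hdim.trans hflat)
    omega

lemma level_eq_of_adj_of_notMem_parentEdges (hd : 0 < d) (hD0 : 0 < D0)
    (hL : L = D0 * 2 ^ k0) {B1 B2 : Box d k0} (h : (boxGraph d k0 D0 L).Adj B1 B2)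
    (he : s(B1, B2) ∉ parentEdges parentBox) : B1.level = B2.level := by
  have h12 := level_le_succ_of_meets hd hD0 (meets_of_meetsDim hd h.2)
  have h21 := level_le_succ_of_meets hd hD0 (meets_of_meetsDim hd h.symm.2)
  rcases lt_trichotomy B1.level B2.level with hlt | heq | hgt
  · have hp := parentBox_eq_of_meetsDim hd hD0 hL h.2 (by omega)
    exact absurd ⟨B1, hp ▸ h.ne', by rw [hp]⟩ he
  · exact heq
  · have hp := parentBox_eq_of_meetsDim hd hD0 hL h.symm.2 (by omega)
    exact absurd ⟨B2, hp ▸ h.ne, by rw [hp, Sym2.eq_swap]⟩ he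

lemma antilipschitzWith_mul_snd {X : Type*} [PseudoMetricSpace X] {r : ℝ} (hr : 1 ≤ r) :
    AntilipschitzWith 1 fun p : X × ℝ => (p.1, r * p.2) := by
  refine AntilipschitzWith.of_le_mul_dist fun p q => ?_
  rw [NNReal.coe_one, one_mul, Prod.dist_eq, Prod.dist_eq, Real.dist_eq p.2, Real.dist_eq,
    ← mul_sub, abs_mul, abs_of_pos (zero_lt_one.trans_le hr)]
  exact max_le_max le_rfl (le_mul_of_one_le_left (abs_nonneg _) hr)

lemma mul_snd_mem_torusShift_closure_parentBox (hd : 0 < d) (hD0 : 0 < D0) {B : Box d k0}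
    (hl : B.level < k0) {v : Fin d → ℤ} {p : (Fin d → ℝ) × ℝ}
    (hp : p ∈ torusShift L v '' closure (boxSet d k0 D0 B)) :
    (p.1, 2 ^ ((d : ℝ) / 2) * p.2) ∈
      torusShift L v '' closure (boxSet d k0 D0 (parentBox B)) := by
  rw [mem_torusShift_closure_boxSet hd hD0] at hp ⊢
  have hr := Real.rpow_nonneg (zero_le_two (α := ℝ)) ((d : ℝ) / 2)
  refine ⟨fun k => ⟨?_, ?_⟩, ?_, fun _ => ?_⟩
  · linarith [Box.lo_parentBox_le_lo hD0 hl k, (hp.1 k).1]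
  · linarith [Box.hi_le_hi_parentBox hD0 hl k, (hp.1 k).2]
  · rw [parentBox_level hl, wLow_succ]
    exact mul_le_mul_of_nonneg_left hp.2.1 hr
  · rw [parentBox_level hl, wLow_succ]
    exact mul_le_mul_of_nonneg_left (hp.2.2 hl) hr

theorem meetsDim_parentBox (hd : 0 < d) (hD0 : 0 < D0) {B1 B2 : Box d k0}
    (hl1 : B1.level < k0) (hl2 : B2.level < k0)
    (h : meetsDim L d (boxSet d k0 D0 B1) (boxSet d k0 D0 B2)) :
    meetsDim L d (boxSet d k0 D0 (parentBox B1)) (boxSet d k0 D0 (parentBox B2)) := by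
  obtain ⟨v, w, hdim⟩ := h
  refine ⟨v, w, hdim.trans ?_⟩
  calc _ ≤ dimH ((fun p : (Fin d → ℝ) × ℝ => (p.1, 2 ^ ((d : ℝ) / 2) * p.2)) '' _) :=
        (antilipschitzWith_mul_snd (one_le_two_rpow_half d)).le_dimH_image _
    _ ≤ _ := dimH_mono <| by
        rintro _ ⟨p, ⟨hp1, hp2⟩, rfl⟩
        exact ⟨mul_snd_mem_torusShift_closure_parentBox hd hD0 hl1 hp1,
          mul_snd_mem_torusShift_closure_parentBox hd hD0 hl2 hp2⟩

lemma mk_wLow_succ_mem_torusShift_closure (hd : 0 < d) (hD0 : 0 < D0) {B : Box d k0}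
    (hl : B.level < k0) {v : Fin d → ℤ} {p : (Fin d → ℝ) × ℝ}
    (hp : p ∈ torusShift L v '' closure (boxSet d k0 D0 B)) :
    (p.1, wLow d (B.level + 1)) ∈ torusShift L v '' closure (boxSet d k0 D0 B) ∧
      (p.1, wLow d (B.level + 1)) ∈ torusShift L v '' closure (boxSet d k0 D0 (parentBox B)) := by
  have hbot : (p.1, wLow d B.level) ∈ torusShift L v '' closure (boxSet d k0 D0 B) := by
    rw [mem_torusShift_closure_boxSet hd hD0] at hp ⊢
    exact ⟨hp.1, B.wLow_mem_weights⟩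
  refine ⟨?_, ?_⟩
  · rw [mem_torusShift_closure_boxSet hd hD0] at hp ⊢
    exact ⟨hp.1, B.wLow_succ_mem_weights⟩
  · rw [wLow_succ]
    exact mul_snd_mem_torusShift_closure_parentBox hd hD0 hl hbot

theorem gPlusGraph_adj_of_mem_gammaSet (hd : 0 < d) (hD0 : 0 < D0)
    {E : Set (Sym2 (Box d k0))} (hE : E ∈ gammaSet d k0 D0 L) {a b : Box d k0}
    (ha : ∃ e ∈ E, a ∈ e) (hb : ∃ e ∈ E, b ∈ e) (hab : a ≠ b) :
    (gPlusGraph d k0 D0 L).Adj a b := by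
  obtain ⟨B1, B2, hadj, hlev, hcase⟩ := hE
  have hl1 := level_lt_of_ne hadj.ne hlev
  obtain ⟨v, w, q, hq1, hq2⟩ := meets_of_meetsDim hd hadj.2
  have h1 := mk_wLow_succ_mem_torusShift_closure hd hD0 hl1 hq1
  have h2 := mk_wLow_succ_mem_torusShift_closure hd hD0 (hlev ▸ hl1) hq2
  rw [← hlev] at h2
  have hvert : ∀ c, (∃ e ∈ E, c ∈ e) → ∃ u,
      (q.1, wLow d (B1.level + 1)) ∈ torusShift L u '' closure (boxSet d k0 D0 c) := by
    rintro c ⟨e, he, hce⟩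
    have : c = B1 ∨ c = parentBox B1 ∨ c = B2 ∨ c = parentBox B2 := by
      rcases hcase with ⟨-, rfl⟩ | ⟨-, rfl⟩ <;>
        simp only [Set.mem_insert_iff, Set.mem_singleton_iff] at he <;>
        rcases he with rfl | rfl | rfl | rfl <;> rw [Sym2.mem_iff] at hce <;> tauto
    rcases this with rfl | rfl | rfl | rfl
    exacts [⟨v, h1.1⟩, ⟨v, h1.2⟩, ⟨w, h2.1⟩, ⟨w, h2.2⟩]
  obtain ⟨ua, hua⟩ := hvert a ha
  obtain ⟨ub, hub⟩ := hvert b hb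
  exact ⟨hab, ua, ub, _, hua, hub⟩

lemma chi_triangle_eq_fundCycle {B1 B2 : Box d k0} (hne : B1 ≠ B2)
    (hlev : B1.level = B2.level) (hp : parentBox B1 = parentBox B2) :
    chi {s(B1, parentBox B1), s(parentBox B1, B2), s(B2, B1)} = fundCycle s(B1, B2) := by
  have hl1 := level_lt_of_ne hne hlev
  have h11 := ne_parentBox_of_level_eq hl1 rfl
  have h21 := ne_parentBox_of_level_eq hl1 hlev.symm
  rw [chi_insert (by simp [hne, h11.symm, h21.symm]), chi_insert (by simp [h11.symm, h21.symm]),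
    chi_singleton, Sym2.eq_swap (a := B2) (b := B1), Sym2.eq_swap (a := parentBox B1) (b := B2),
    fundCycle_mk, rootPath_of_lt hl1, rootPath_of_lt (B := B2) (hlev ▸ hl1), ← hp,
    ← sub_eq_zero, ZModModule.sub_eq_add]
  abel_nf
  simp only [two_zsmul, ZModModule.add_self]

lemma chi_quadrangle_eq_fundCycle_add {B1 B2 : Box d k0} (hne : B1 ≠ B2)
    (hlev : B1.level = B2.level) (hp : parentBox B1 ≠ parentBox B2) :
    chi {s(B1, parentBox B1), s(parentBox B1, parentBox B2), s(parentBox B2, B2), s(B2, B1)} =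
      fundCycle s(B1, B2) + fundCycle s(parentBox B1, parentBox B2) := by
  have hl1 := level_lt_of_ne hne hlev
  have hl2 : B2.level < k0 := hlev ▸ hl1
  have h11 := ne_parentBox_of_level_eq hl1 rfl
  have h12 := ne_parentBox_of_level_eq hl2 hlev
  have h21 := ne_parentBox_of_level_eq hl1 hlev.symm
  have h22 := ne_parentBox_of_level_eq hl2 rfl
  rw [chi_insert (by simp [hne, h11, h12, h21.symm]), chi_insert (by simp [hp, h11.symm, h21.symm]),
    chi_insert (by simp [h12.symm, h22.symm]), chi_singleton, Sym2.eq_swap (a := B2) (b := B1),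
    Sym2.eq_swap (a := parentBox B2) (b := B2), fundCycle_mk, fundCycle_mk, rootPath_of_lt hl1,
    rootPath_of_lt hl2, ← sub_eq_zero, ZModModule.sub_eq_add]
  abel_nf
  simp only [two_zsmul, ZModModule.add_self]

theorem fundCycle_mem_span (hd : 0 < d) (hD0 : 0 < D0) (hL : L = D0 * 2 ^ k0)
    {B1 B2 : Box d k0} (hadj : (boxGraph d k0 D0 L).Adj B1 B2) (hlev : B1.level = B2.level) :
    fundCycle s(B1, B2) ∈ Submodule.span (ZMod 2) (chi '' gammaSet d k0 D0 L) := by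
  have hl1 := level_lt_of_ne hadj.ne hlev
  have hl2 : B2.level < k0 := hlev ▸ hl1
  by_cases hp : parentBox B1 = parentBox B2
  · rw [← chi_triangle_eq_fundCycle hadj.ne hlev hp]
    exact Submodule.subset_span ⟨_, ⟨B1, B2, hadj, hlev, Or.inl ⟨hp, rfl⟩⟩, rfl⟩
  · have hIH := fundCycle_mem_span hd hD0 hL ⟨hp, meetsDim_parentBox hd hD0 hl1 hl2 hadj.2⟩
      (by rw [parentBox_level hl1, parentBox_level hl2, hlev])
    have hmem : chi _ ∈ Submodule.span (ZMod 2) (chi '' gammaSet d k0 D0 L) :=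
      Submodule.subset_span ⟨_, ⟨B1, B2, hadj, hlev, Or.inr ⟨hp, rfl⟩⟩, rfl⟩
    rw [chi_quadrangle_eq_fundCycle_add hadj.ne hlev hp] at hmem
    simpa using Submodule.sub_mem _ hmem hIH
termination_by k0 - B1.level
decreasing_by rw [parentBox_level hl1]; omega

theorem chi_edgeSet_mem_span_gammaSet (hd : 0 < d) (hD0 : 0 < D0) (hL : L = D0 * 2 ^ k0)
    {H : SimpleGraph (Box d k0)} (hH : H ≤ boxGraph d k0 D0 L)
    (heven : ∀ v, Even {u | H.Adj v u}.ncard) :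
    chi H.edgeSet ∈ Submodule.span (ZMod 2) (chi '' gammaSet d k0 D0 L) := by
  classical
  refine mem_of_edgeBoundary_eq_zero (rank := Box.level) (fun B hB => level_lt_parentBox_level hB)
    (Finset.univ.filter fun e => e ∈ H.edgeSet ∧ e ∉ parentEdges parentBox) fundCycle
    (fun e he => ?_) (fun e he => ?_) (fun e _ e' he' => fundCycle_apply_of_notMem he' e)
    (edgeBoundary_chi_edgeSet heven) (fun e he heS => ?_)
  · induction e using Sym2.ind with
    | _ B1 B2 =>
      simp only [Finset.mem_filter, Finset.mem_univ, true_and, SimpleGraph.mem_edgeSet] at he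
      exact fundCycle_mem_span hd hD0 hL (hH he.1)
        (level_eq_of_adj_of_notMem_parentEdges hd hD0 hL (hH he.1) he.2)
  · induction e using Sym2.ind with
    | _ B1 B2 =>
      simp only [Finset.mem_filter, Finset.mem_univ, true_and, SimpleGraph.mem_edgeSet] at he
      exact edgeBoundary_fundCycle he.1.ne
  · have : e ∉ H.edgeSet := fun h => heS (Finset.mem_filter.2 ⟨Finset.mem_univ _, h, he⟩)
    simp [chi, this]

end Boxes

/-- The set `Γ` generates the cycle space of `𝓑` over `GF(2)`: the edge
set of every subgraph of `𝓑` in which all vertices have even degree lies in the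
`GF(2)`-span of the edge sets of the members of `Γ` (i.e. it is a symmetric difference of
members of `Γ`).  Moreover, the vertex set of every member of `Γ` induces a clique
in `𝓖⁺`. -/
theorem statement_5 (d : ℕ) (hd : 1 ≤ d) (n k0 : ℕ) (D0 : ℝ) (hD0 : 0 < D0)
    (hn : (n : ℝ) ^ ((1 : ℝ) / d) = D0 * 2 ^ k0) :
    (∀ H : SimpleGraph (Box d k0), H ≤ boxGraph d k0 D0 ((n : ℝ) ^ ((1 : ℝ) / d)) →
      (∀ v : Box d k0, Even {u | H.Adj v u}.ncard) →
      chi H.edgeSet ∈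
        Submodule.span (ZMod 2)
          (chi '' gammaSet d k0 D0 ((n : ℝ) ^ ((1 : ℝ) / d)))) ∧
    (∀ E ∈ gammaSet d k0 D0 ((n : ℝ) ^ ((1 : ℝ) / d)), ∀ a b : Box d k0,
      (∃ e ∈ E, a ∈ e) → (∃ e ∈ E, b ∈ e) → a ≠ b →
      (gPlusGraph d k0 D0 ((n : ℝ) ^ ((1 : ℝ) / d))).Adj a b) :=
  ⟨fun _ hH heven => chi_edgeSet_mem_span_gammaSet hd hD0 hn hH heven,
    fun _ hE _ _ ha hb hab => gPlusGraph_adj_of_mem_gammaSet hd hD0 hE ha hb hab⟩
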